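/- arXiv:2304.08482 — 4 statements merged into one kernel-verified Lean document; each statement's English description precedes it below -/
import Mathlib

section
/- Let B ∈ ℂ^{p×p} be the coefficient matrix of a linear complex-valued structural causal model whose directed graph G is acyclic, and let Y = (I − B)^{-1}ε where the ε_j are independent complex Gaussians each with variance 1/T. If node j has no parents in G, then Var(Y_j) = 1/T; otherwise Var(Y_j) ≥ (1/T)(1 + η) > 1/T, where η = min over edges (k,j) of β_{jk}·conj(β_{jk}). -/
open Matrix

/-- For a linear complex-valued SCM `Y = (I - B)⁻¹ ε` with acyclic
coefficient graph and independent complex Gaussian errors of variance `1/T`, the variance of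
`Y_j` (the `j`-th diagonal entry of the covariance matrix `(1/T)(I-B)⁻¹((I-B)⁻¹)ᴴ`) equals
`1/T` if `j` has no parents, and is at least `(1/T)(1+η) > 1/T` otherwise, where
`η = min over edges (k,j) of β_{jk} · conj(β_{jk})`. -/
theorem stmt0 (p T : ℕ) (hT : 0 < T) (B : Matrix (Fin p) (Fin p) ℂ)
    (hacyc : ∀ j : Fin p, ¬ Relation.TransGen (fun k j : Fin p => B j k ≠ 0) j j)
    (varY : Fin p → ℝ)
    (hvar : ∀ j, varY j =
      (((((T : ℂ))⁻¹ • ((1 - B)⁻¹ * ((1 - B)⁻¹)ᴴ)) : Matrix (Fin p) (Fin p) ℂ) j j).re)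
    (η : ℝ)
    (hη : η = sInf {x : ℝ | ∃ k j : Fin p, B j k ≠ 0 ∧ x = Complex.normSq (B j k)}) :
    ∀ j : Fin p,
      ((∀ k, B j k = 0) → varY j = 1 / T) ∧
      ((∃ k, B j k ≠ 0) → (1 / T) * (1 + η) ≤ varY j ∧ 1 / (T : ℝ) < varY j) := by
  classical
  set r : Fin p → Fin p → Prop := fun k j => B j k ≠ 0 with hrdef
  -- rank function is strictly monotone along ancestry
  have hrank : ∀ {k j : Fin p}, Relation.TransGen r k j →
      (Finset.univ.filter (fun m => Relation.TransGen r m k)).card <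
      (Finset.univ.filter (fun m => Relation.TransGen r m j)).card := by
    intro k j hkj
    apply Finset.card_lt_card
    constructor
    · intro m hm
      simp only [Finset.mem_filter, Finset.mem_univ, true_and] at *
      exact hm.trans hkj
    · intro hsub
      have hk : k ∈ Finset.univ.filter (fun m => Relation.TransGen r m j) := by
        simp only [Finset.mem_filter, Finset.mem_univ, true_and]; exact hkj
      have := hsub hk
      simp only [Finset.mem_filter, Finset.mem_univ, true_and] at this
      exact hacyc k this
  have hranklt : ∀ i : Fin p,
      (Finset.univ.filter (fun m => Relation.TransGen r m i)).card < p := by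
    intro i
    have hne : Finset.univ.filter (fun m => Relation.TransGen r m i) ≠ Finset.univ := by
      intro h
      have : i ∈ Finset.univ.filter fun m => Relation.TransGen r m i := by
        rw [h]; exact Finset.mem_univ i
      simp only [Finset.mem_filter, Finset.mem_univ, true_and] at this
      exact hacyc i this
    have := Finset.card_lt_card (Finset.ssubset_univ_iff.mpr hne)
    simpa using this
  -- nilpotency
  have hpow : ∀ n (i j : Fin p), (B ^ n) i j ≠ 0 →
      n ≤ (Finset.univ.filter (fun m => Relation.TransGen r m i)).card := by
    intro n
    induction n with
    | zero => intro i j _; exact Nat.zero_le _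
    | succ n ih =>
      intro i j hij
      rw [pow_succ', Matrix.mul_apply] at hij
      obtain ⟨m, _, hm⟩ := Finset.exists_ne_zero_of_sum_ne_zero hij
      have h1 : B i m ≠ 0 := left_ne_zero_of_mul hm
      have h2 : (B ^ n) m j ≠ 0 := right_ne_zero_of_mul hm
      have hlt := hrank (Relation.TransGen.single (show r m i from h1))
      exact Nat.succ_le_of_lt (lt_of_le_of_lt (ih m j h2) hlt)
  have hnil : B ^ p = 0 := by
    ext i j
    simp only [Matrix.zero_apply]
    by_contra h
    exact absurd (hpow p i j h) (not_le.mpr (hranklt i))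
  have hunit : IsUnit (1 - B) := IsNilpotent.isUnit_one_sub ⟨p, hnil⟩
  set K : Matrix (Fin p) (Fin p) ℂ := (1 - B)⁻¹ with hKdef
  have hinv : (1 - B) * K = 1 :=
    Matrix.mul_nonsing_inv _ ((Matrix.isUnit_iff_isUnit_det _).mp hunit)
  have hKrec : K = 1 + B * K := by
    have h := hinv
    rw [sub_mul, one_mul, sub_eq_iff_eq_add] at h
    exact h
  have hrec : ∀ i j, K i j = (if i = j then (1:ℂ) else 0) + ∑ m, B i m * K m j := by
    intro i j
    conv_lhs => rw [hKrec]
    simp [Matrix.add_apply, Matrix.mul_apply, Matrix.one_apply]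
  -- well-founded induction setup
  haveI : IsTrans (Fin p) (Relation.TransGen r) := ⟨fun _ _ _ => Relation.TransGen.trans⟩
  haveI : IsIrrefl (Fin p) (Relation.TransGen r) := ⟨hacyc⟩
  have hwf : WellFounded (Relation.TransGen r) := Finite.wellFounded_of_trans_of_irrefl _
  have hstruct : ∀ j, K j j = 1 ∧ ∀ l, ¬ Relation.TransGen r l j → l ≠ j → K j l = 0 := by
    intro j
    refine hwf.induction (C := fun j => K j j = 1 ∧ ∀ l, ¬ Relation.TransGen r l j → l ≠ j → K j l = 0) j (fun j ih => ?_)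
    constructor
    · rw [hrec j j, if_pos rfl]
      have hsum : ∑ m, B j m * K m j = 0 := by
        apply Finset.sum_eq_zero
        intro m _
        by_cases hm : B j m = 0
        · rw [hm, zero_mul]
        · have hmj : Relation.TransGen r m j := Relation.TransGen.single hm
          have h1 : ¬ Relation.TransGen r j m := fun h => hacyc j (h.trans hmj)
          have h2 : j ≠ m := by
            intro h
            exact hacyc m (by rw [h] at hmj; exact hmj)
          rw [(ih m hmj).2 j h1 h2, mul_zero]
      rw [hsum, add_zero]
    · intro l hl hlj
      rw [hrec j l, if_neg (Ne.symm hlj)]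
      have hsum : ∑ m, B j m * K m l = 0 := by
        apply Finset.sum_eq_zero
        intro m _
        by_cases hm : B j m = 0
        · rw [hm, zero_mul]
        · have hmj : Relation.TransGen r m j := Relation.TransGen.single hm
          have hlm : ¬ Relation.TransGen r l m := fun h => hl (h.trans hmj)
          have hlm' : l ≠ m := by
            intro h
            exact hl (by rw [h]; exact hmj)
          rw [(ih m hmj).2 l hlm hlm', mul_zero]
      rw [hsum, add_zero]
  -- diagonal of K Kᴴ
  have hM : ∀ j, (K * Kᴴ) j j = ((∑ l, Complex.normSq (K j l) : ℝ) : ℂ) := by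
    intro j
    rw [Matrix.mul_apply]
    push_cast
    refine Finset.sum_congr rfl fun l _ => ?_
    rw [Matrix.conjTranspose_apply, Complex.star_def, Complex.mul_conj]
  have hvar' : ∀ j, varY j = (T:ℝ)⁻¹ * ∑ l, Complex.normSq (K j l) := by
    intro j
    rw [hvar j, Matrix.smul_apply, hM j, smul_eq_mul]
    rw [show ((T:ℂ))⁻¹ = (((T:ℝ)⁻¹ : ℝ) : ℂ) from by push_cast; ring,
      ← Complex.ofReal_mul, Complex.ofReal_re]
  have hTpos : (0:ℝ) < (T:ℝ)⁻¹ := inv_pos.mpr (Nat.cast_pos.mpr hT)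
  intro j
  constructor
  · -- no parents
    intro hpar
    have hKrow : ∀ l, K j l = if j = l then 1 else 0 := by
      intro l
      rw [hrec j l]
      simp [hpar]
    have hsum : ∑ l, Complex.normSq (K j l) = 1 := by
      simp only [hKrow]
      rw [Finset.sum_eq_single j]
      · simp
      · intro m _ hmj
        simp [Ne.symm hmj]
      · intro h; exact absurd (Finset.mem_univ j) h
    rw [hvar' j, hsum, mul_one, one_div]
  · -- has a parent
    rintro ⟨k, hk⟩
    -- η facts
    have hEfin : {x : ℝ | ∃ k j : Fin p, B j k ≠ 0 ∧ x = Complex.normSq (B j k)}.Finite := by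
      have hsub : {x : ℝ | ∃ k j : Fin p, B j k ≠ 0 ∧ x = Complex.normSq (B j k)} ⊆
          (fun q : Fin p × Fin p => Complex.normSq (B q.1 q.2)) '' Set.univ := by
        rintro x ⟨k', j', _, rfl⟩
        exact ⟨(j', k'), Set.mem_univ _, rfl⟩
      exact Set.Finite.subset (Set.finite_univ.image _) hsub
    have hEne : {x : ℝ | ∃ k j : Fin p, B j k ≠ 0 ∧ x = Complex.normSq (B j k)}.Nonempty :=
      ⟨Complex.normSq (B j k), k, j, hk, rfl⟩
    have hηmem : η ∈ {x : ℝ | ∃ k j : Fin p, B j k ≠ 0 ∧ x = Complex.normSq (B j k)} := by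
      rw [hη]; exact hEne.csInf_mem hEfin
    have hηpos : 0 < η := by
      obtain ⟨k', j', hk', hx⟩ := hηmem
      rw [hx]
      exact Complex.normSq_pos.mpr hk'
    -- maximal parent
    have hswf : WellFounded (fun a b : Fin p => Relation.TransGen r b a) := by
      haveI : IsTrans (Fin p) (fun a b : Fin p => Relation.TransGen r b a) :=
        ⟨fun _ _ _ h1 h2 => h2.trans h1⟩
      haveI : IsIrrefl (Fin p) (fun a b : Fin p => Relation.TransGen r b a) := ⟨hacyc⟩
      exact Finite.wellFounded_of_trans_of_irrefl _
    obtain ⟨k₀, hk₀S, hk₀max⟩ := hswf.has_min {m : Fin p | B j m ≠ 0} ⟨k, hk⟩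
    have hk₀ : B j k₀ ≠ 0 := hk₀S
    have hjk : j ≠ k₀ := by
      intro h
      exact hacyc k₀ (Relation.TransGen.single (show r k₀ k₀ from h ▸ hk₀))
    have hKjk : K j k₀ = B j k₀ := by
      rw [hrec j k₀]
      have hsum : ∑ m, B j m * K m k₀ = B j k₀ := by
        rw [Finset.sum_eq_single k₀]
        · rw [(hstruct k₀).1, mul_one]
        · intro m _ hmk
          by_cases hm : B j m = 0
          · rw [hm, zero_mul]
          · have hKm : K m k₀ = 0 := (hstruct m).2 k₀ (hk₀max m hm) (Ne.symm hmk)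
            rw [hKm, mul_zero]
        · intro h; exact absurd (Finset.mem_univ k₀) h
      rw [if_neg hjk, hsum, zero_add]
    have hηle : η ≤ Complex.normSq (B j k₀) := by
      rw [hη]
      exact csInf_le hEfin.bddBelow ⟨k₀, j, hk₀, rfl⟩
    have hsumge : 1 + η ≤ ∑ l, Complex.normSq (K j l) := by
      have h1 : ∑ l ∈ ({j, k₀} : Finset (Fin p)), Complex.normSq (K j l)
          ≤ ∑ l, Complex.normSq (K j l) :=
        Finset.sum_le_sum_of_subset_of_nonneg (Finset.subset_univ _)
          (fun i _ _ => Complex.normSq_nonneg _)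
      rw [Finset.sum_pair hjk, (hstruct j).1, hKjk] at h1
      simp only [Complex.normSq_one] at h1
      linarith
    constructor
    · rw [hvar' j, one_div]
      exact mul_le_mul_of_nonneg_left hsumge (le_of_lt hTpos)
    · rw [hvar' j, one_div]
      have h2 : (1:ℝ) < ∑ l, Complex.normSq (K j l) := lt_of_lt_of_le (by linarith) hsumge
      calc (T:ℝ)⁻¹ = (T:ℝ)⁻¹ * 1 := (mul_one _).symm
        _ < (T:ℝ)⁻¹ * ∑ l, Complex.normSq (K j l) := by
            exact mul_lt_mul_of_pos_left h2 hTpos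
end

section
/- Define h(B) = tr(exp(B ⊙ B*)) − p for B ∈ ℂ^{p×p}, where ⊙ is the entrywise (Hadamard) product and B* is the entrywise complex conjugate. Then h(B) ≥ 0, and h(B) = 0 if and only if the directed graph with edge k → j whenever B_{jk} ≠ 0 is acyclic. -/
/-!
Let `A = (|B_{jk}|²)`, a nonnegative real matrix whose complexification is `B ⊙ B*`, so `h(B)`
is real. The exponential series gives `h(B) = ∑_{k ≥ 1} tr(A^k) / k!`, a series of nonnegative
terms, and `(A^k)_{ii} > 0` exactly when the graph of `A` has a closed walk of length `k`
through `i`. Hence `h(B) ≥ 0`, with equality iff no such walk exists, i.e. iff the graph is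
acyclic.
-/

open NormedSpace Relation
open scoped Nat

namespace Matrix

variable {ι R : Type*} [Fintype ι] [DecidableEq ι]

theorem transGen_of_pow_succ_apply_ne_zero [Semiring R] {A : Matrix ι ι R} (k : ℕ) {i j : ι}
    (h : (A ^ (k + 1)) i j ≠ 0) : TransGen (fun i j => A i j ≠ 0) i j := by
  induction k generalizing j with
  | zero => exact .single (by simpa using h)
  | succ k ih =>
    rw [pow_succ, mul_apply] at h
    obtain ⟨l, -, hl⟩ := Finset.exists_ne_zero_of_sum_ne_zero h
    exact .tail (ih (left_ne_zero_of_mul hl)) (right_ne_zero_of_mul hl)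

theorem exists_pow_succ_apply_pos_of_transGen [Semiring R] [PartialOrder R]
    [IsStrictOrderedRing R] {A : Matrix ι ι R} (hA : ∀ i j, 0 ≤ A i j) {i j : ι}
    (h : TransGen (fun i j => A i j ≠ 0) i j) : ∃ k, 0 < (A ^ (k + 1)) i j := by
  induction h with
  | single hij => exact ⟨0, by simpa using (hA _ _).lt_of_ne' hij⟩
  | @tail l j _ hlj ih =>
    obtain ⟨k, hk⟩ := ih
    refine ⟨k + 1, ?_⟩
    rw [pow_succ, mul_apply]
    exact Finset.sum_pos' (fun m _ => mul_nonneg (pow_apply_nonneg hA _ _ _) (hA _ _))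
      ⟨l, Finset.mem_univ _, mul_pos hk ((hA _ _).lt_of_ne' hlj)⟩

theorem exists_pow_succ_apply_pos_iff_transGen [Semiring R] [PartialOrder R]
    [IsStrictOrderedRing R] {A : Matrix ι ι R} (hA : ∀ i j, 0 ≤ A i j) {i j : ι} :
    (∃ k, 0 < (A ^ (k + 1)) i j) ↔ TransGen (fun i j => A i j ≠ 0) i j :=
  ⟨fun ⟨k, hk⟩ => transGen_of_pow_succ_apply_ne_zero k hk.ne',
    exists_pow_succ_apply_pos_of_transGen hA⟩

theorem hasSum_exp {𝕂 : Type*} [RCLike 𝕂] (A : Matrix ι ι 𝕂) :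
    HasSum (fun k => (k !⁻¹ : 𝕂) • A ^ k) (exp A) := by
  open scoped Matrix.Norms.Operator in
  exact exp_series_hasSum_exp' A

theorem hasSum_trace_exp {𝕂 : Type*} [RCLike 𝕂] (A : Matrix ι ι 𝕂) :
    HasSum (fun k => (k !⁻¹ : 𝕂) * trace (A ^ k)) (trace (exp A)) := by
  simpa [Function.comp_def, trace_smul] using
    (hasSum_exp A).map (traceAddMonoidHom ι 𝕂) continuous_id.matrix_trace

theorem hasSum_trace_exp_sub_card {𝕂 : Type*} [RCLike 𝕂] (A : Matrix ι ι 𝕂) :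
    HasSum (fun k => ((k + 1)! ⁻¹ : 𝕂) * trace (A ^ (k + 1)))
      (trace (exp A) - Fintype.card ι) := by
  simpa using (hasSum_nat_add_iff' 1).2 (hasSum_trace_exp A)

theorem exp_map_ofReal (A : Matrix ι ι ℝ) :
    exp (A.map ((↑) : ℝ → ℂ)) = (exp A).map (↑) := by
  open scoped Matrix.Norms.Operator in
  exact (map_exp Complex.ofRealHom.mapMatrix
    (continuous_id.matrix_map Complex.continuous_ofReal) A).symm

section Nonneg

variable {A : Matrix ι ι ℝ} (hA : ∀ i j, 0 ≤ A i j)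
include hA

theorem trace_pow_nonneg (k : ℕ) : 0 ≤ trace (A ^ k) :=
  Finset.sum_nonneg fun i _ => pow_apply_nonneg hA k i i

theorem card_le_trace_exp : (Fintype.card ι : ℝ) ≤ trace (exp A) :=
  sub_nonneg.1 <| (hasSum_trace_exp_sub_card A).nonneg fun k =>
    mul_nonneg (by positivity) (trace_pow_nonneg hA _)

theorem trace_exp_eq_card_iff_forall_trace_pow_succ_eq_zero :
    trace (exp A) = Fintype.card ι ↔ ∀ k, trace (A ^ (k + 1)) = 0 := by
  have hs := hasSum_trace_exp_sub_card A
  have hterm k : 0 ≤ ((k + 1)! ⁻¹ : ℝ) * trace (A ^ (k + 1)) :=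
    mul_nonneg (by positivity) (trace_pow_nonneg hA _)
  calc trace (exp A) = Fintype.card ι
      ↔ HasSum (fun k => ((k + 1)! ⁻¹ : ℝ) * trace (A ^ (k + 1))) 0 :=
        sub_eq_zero.symm.trans ⟨fun h => h ▸ hs, hs.unique⟩
    _ ↔ ∀ k, ((k + 1)! ⁻¹ : ℝ) * trace (A ^ (k + 1)) = 0 :=
        (hasSum_zero_iff_of_nonneg hterm).trans funext_iff
    _ ↔ ∀ k, trace (A ^ (k + 1)) = 0 := by simp [Nat.factorial_ne_zero]

theorem trace_exp_eq_card_iff :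
    trace (exp A) = Fintype.card ι ↔ ∀ i, ¬TransGen (fun i j => A i j ≠ 0) i i := by
  simp only [trace_exp_eq_card_iff_forall_trace_pow_succ_eq_zero hA,
    ← exists_pow_succ_apply_pos_iff_transGen hA, not_exists, not_lt]
  rw [forall_comm]
  refine forall_congr' fun k => ?_
  rw [trace, Fintype.sum_eq_zero_iff_of_nonneg fun i => pow_apply_nonneg hA _ i i, funext_iff]
  exact forall_congr' fun i => (pow_apply_nonneg hA _ i i).ge_iff_eq'.symm

end Nonneg

end Matrix

/-- For `B ∈ ℂ^{p×p}`, define `h(B) = tr(exp(B ⊙ B*)) − p`, where `⊙` is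
the entrywise product and `B*` the entrywise conjugate.  Then `h(B)` is a nonnegative real
number, and `h(B) = 0` iff the directed graph with edge `k → j` whenever `B j k ≠ 0` is
acyclic. -/
theorem stmt3 (p : ℕ) (B : Matrix (Fin p) (Fin p) ℂ) :
    (((NormedSpace.exp (fun j k => B j k * star (B j k)) : Matrix (Fin p) (Fin p) ℂ)).trace
        - p).im = 0 ∧
    0 ≤ (((NormedSpace.exp (fun j k => B j k * star (B j k)) : Matrix (Fin p) (Fin p) ℂ)).trace
        - p).re ∧
    ((((NormedSpace.exp (fun j k => B j k * star (B j k)) : Matrix (Fin p) (Fin p) ℂ)).trace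
        - p) = 0 ↔
      ∀ j : Fin p, ¬ Relation.TransGen (fun k j : Fin p => B j k ≠ 0) j j) := by
  set A : Matrix (Fin p) (Fin p) ℝ := B.map Complex.normSq
  have hA : ∀ j k, 0 ≤ A j k := fun j k => Complex.normSq_nonneg _
  have hhadamard : (fun j k => B j k * star (B j k) : Matrix (Fin p) (Fin p) ℂ) = A.map (↑) := by
    ext j k
    exact Complex.mul_conj _
  have hreal : (exp (fun j k => B j k * star (B j k)) : Matrix (Fin p) (Fin p) ℂ).trace - p =
      (((exp A).trace - p : ℝ) : ℂ) := by
    rw [hhadamard, Matrix.exp_map_ofReal]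
    simp [Matrix.trace]
  have hgraph : (fun k j : Fin p => B j k ≠ 0) = Function.swap fun j k => A j k ≠ 0 := by
    ext
    simp [A]
  rw [hreal, hgraph]
  refine ⟨Complex.ofReal_im _, by simpa using Matrix.card_le_trace_exp hA, ?_⟩
  rw [Complex.ofReal_eq_zero, sub_eq_zero]
  simpa only [Fintype.card_fin] using
    (Matrix.trace_exp_eq_card_iff hA).trans (forall_congr' fun j => not_congr transGen_swap.symm)
end

section
/- Let Y = (I − B)^{-1}ε as in the complex-valued equal-variance SCM (ε_j independent with variance 1/T), and let Θ be a set of nodes closed under taking ancestors (i.e., containing all ancestors of its elements). For j ∉ Θ, the conditional variance Var(Y_j | Y_Θ) equals 1/T if all parents of j lie in Θ, and is at least (1/T)(1 + η) otherwise, where η = min over edges (k,j) of |β_{jk}|². -/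
open Matrix

namespace Stmt10Aux

variable {p : ℕ} (B : Matrix (Fin p) (Fin p) ℂ)

open scoped Classical in
noncomputable def ht (x : Fin p) : ℕ :=
  (Finset.univ.filter (fun k => Relation.TransGen (fun k j => B j k ≠ 0) k x)).card

variable (hacyc : ∀ j : Fin p, ¬ Relation.TransGen (fun k j : Fin p => B j k ≠ 0) j j)

include hacyc

lemma edge_ht {j k : Fin p} (h : B j k ≠ 0) : ht B k < ht B j := by
  classical
  unfold ht
  have hsub : insert k (Finset.univ.filter
      (fun m => Relation.TransGen (fun k j => B j k ≠ 0) m k)) ⊆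
      Finset.univ.filter (fun m => Relation.TransGen (fun k j => B j k ≠ 0) m j) := by
    intro m hm
    simp only [Finset.mem_insert, Finset.mem_filter, Finset.mem_univ, true_and] at hm ⊢
    rcases hm with rfl | hm
    · exact Relation.TransGen.single h
    · exact hm.tail h
  have hk : k ∉ Finset.univ.filter
      (fun m => Relation.TransGen (fun k j => B j k ≠ 0) m k) := by
    simp only [Finset.mem_filter, Finset.mem_univ, true_and]
    exact hacyc k
  calc (Finset.univ.filter (fun m => Relation.TransGen (fun k j => B j k ≠ 0) m k)).card
      < (insert k (Finset.univ.filter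
          (fun m => Relation.TransGen (fun k j => B j k ≠ 0) m k))).card := by
        rw [Finset.card_insert_of_notMem hk]; omega
    _ ≤ _ := Finset.card_le_card hsub

lemma reach_ht {a b : Fin p}
    (h : Relation.TransGen (fun k j : Fin p => B j k ≠ 0) a b) : ht B a < ht B b := by
  induction h with
  | single h => exact edge_ht B hacyc h
  | tail _ h ih => exact ih.trans (edge_ht B hacyc h)

omit hacyc in
lemma pow_reach : ∀ (n : ℕ) {j k : Fin p}, (B ^ (n + 1)) j k ≠ 0 →
    Relation.TransGen (fun k j : Fin p => B j k ≠ 0) k j := by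
  intro n
  induction n with
  | zero => intro j k h; rw [pow_one] at h; exact Relation.TransGen.single h
  | succ n ih =>
    intro j k h
    rw [pow_succ, Matrix.mul_apply] at h
    obtain ⟨l, _, hl⟩ := Finset.exists_ne_zero_of_sum_ne_zero h
    have h1 : (B ^ (n + 1)) j l ≠ 0 := left_ne_zero_of_mul hl
    have h2 : B l k ≠ 0 := right_ne_zero_of_mul hl
    exact Relation.TransGen.head h2 (ih h1)

lemma pow_ht : ∀ (n : ℕ) {j k : Fin p}, (B ^ n) j k ≠ 0 → n + ht B k ≤ ht B j := by
  intro n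
  induction n with
  | zero =>
    intro j k h
    rw [pow_zero] at h
    rcases eq_or_ne j k with rfl | hne
    · omega
    · exact absurd (Matrix.one_apply_ne hne) h
  | succ n ih =>
    intro j k h
    rw [pow_succ, Matrix.mul_apply] at h
    obtain ⟨l, _, hl⟩ := Finset.exists_ne_zero_of_sum_ne_zero h
    have h1 := ih (left_ne_zero_of_mul hl)
    have h2 := edge_ht B hacyc (right_ne_zero_of_mul hl)
    omega

lemma ht_lt (j : Fin p) : ht B j < p := by
  classical
  unfold ht
  have hsub : Finset.univ.filter
      (fun m => Relation.TransGen (fun k j => B j k ≠ 0) m j) ⊆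
      Finset.univ.erase j := by
    intro m hm
    simp only [Finset.mem_filter, Finset.mem_univ, true_and] at hm
    simp only [Finset.mem_erase, Finset.mem_univ, and_true]
    rintro rfl; exact hacyc m hm
  have := Finset.card_le_card hsub
  have hcard : (Finset.univ.erase j).card = p - 1 := by
    rw [Finset.card_erase_of_mem (Finset.mem_univ j), Finset.card_univ, Fintype.card_fin]
  have hp : 0 < p := j.pos
  omega

lemma pow_p : B ^ p = 0 := by
  ext j k
  by_contra h
  have := pow_ht B hacyc p h
  have := ht_lt B hacyc j
  omega

end Stmt10Aux

/-- Let `Y = (I − B)⁻¹ε` be the complex-valued equal-variance SCM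
(errors independent with variance `1/T`), with covariance
`Σ = (1/T)(I−B)⁻¹((I−B)⁻¹)ᴴ`, and let `Θ` be a set of nodes closed under taking ancestors.
For `j ∉ Θ`, the conditional variance
`Var(Y_j | Y_Θ) = Σ_{jj} − Σ_{j,Θ} Σ_{Θ,Θ}⁻¹ Σ_{Θ,j}` equals `1/T` if all parents of `j`
lie in `Θ`, and is at least `(1/T)(1+η)` otherwise, where
`η = min over edges (k,j) of |β_{jk}|²`. -/
theorem stmt10 (p T : ℕ) (hT : 0 < T) (B : Matrix (Fin p) (Fin p) ℂ)
    (hacyc : ∀ j : Fin p, ¬ Relation.TransGen (fun k j : Fin p => B j k ≠ 0) j j)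
    (Θ : Finset (Fin p))
    (hanc : ∀ a b : Fin p,
      Relation.TransGen (fun k j : Fin p => B j k ≠ 0) a b → b ∈ Θ → a ∈ Θ)
    (Sg : Matrix (Fin p) (Fin p) ℂ)
    (hSg : Sg = ((T : ℂ))⁻¹ • ((1 - B)⁻¹ * ((1 - B)⁻¹)ᴴ))
    (condVar : Fin p → ℂ)
    (hcond : ∀ j, condVar j =
      Sg j j -
        (fun a : Θ => Sg j a) ⬝ᵥ
          ((fun a b : Θ => Sg a b : Matrix Θ Θ ℂ)⁻¹ *ᵥ (fun b : Θ => Sg b j)))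
    (η : ℝ)
    (hη : η = sInf {x : ℝ | ∃ k j : Fin p, B j k ≠ 0 ∧ x = Complex.normSq (B j k)}) :
    ∀ j : Fin p, j ∉ Θ →
      ((∀ k, B j k ≠ 0 → k ∈ Θ) → condVar j = ((T : ℂ))⁻¹) ∧
      ((∃ k, B j k ≠ 0 ∧ k ∉ Θ) →
        (1 / T) * (1 + η) ≤ (condVar j).re) := by
  intro j hjΘ
  classical
  have hTc : (T : ℂ) ≠ 0 := Nat.cast_ne_zero.mpr hT.ne'
  have hpow : B ^ p = 0 := Stmt10Aux.pow_p B hacyc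
  have hunit : IsUnit (1 - B) := IsNilpotent.isUnit_one_sub ⟨p, hpow⟩
  have hdet : IsUnit (1 - B).det := (Matrix.isUnit_iff_isUnit_det _).mp hunit
  set A := (1 - B)⁻¹ with hA
  have h1 : (1 - B) * A = 1 := Matrix.mul_nonsing_inv _ hdet
  have h2 : A * (1 - B) = 1 := Matrix.nonsing_inv_mul _ hdet
  have hAgeom : A = ∑ n ∈ Finset.range p, B ^ n := by
    refine Matrix.inv_eq_right_inv ?_
    rw [mul_neg_geom_sum, hpow, sub_zero]
  have hAent : ∀ a m : Fin p, A a m ≠ 0 →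
      a = m ∨ Relation.TransGen (fun k j : Fin p => B j k ≠ 0) m a := by
    intro a m h
    rw [hAgeom, Matrix.sum_apply] at h
    obtain ⟨n, _, hn⟩ := Finset.exists_ne_zero_of_sum_ne_zero h
    cases n with
    | zero =>
      rw [pow_zero] at hn
      left
      by_contra hne
      exact hn (Matrix.one_apply_ne hne)
    | succ n => exact Or.inr (Stmt10Aux.pow_reach B n hn)
  have hAdiag : ∀ a : Fin p, A a a = 1 := by
    intro a
    rw [hAgeom, Matrix.sum_apply]
    rw [Finset.sum_eq_single 0]
    · rw [pow_zero, Matrix.one_apply_eq]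
    · intro n _ hn
      obtain ⟨m, rfl⟩ := Nat.exists_eq_succ_of_ne_zero hn
      by_contra h
      exact hacyc a (Stmt10Aux.pow_reach B m h)
    · intro h
      exact absurd (Finset.mem_range.mpr a.pos) h
  have hA0 : ∀ a m : Fin p, a ∈ Θ → m ∉ Θ → A a m = 0 := by
    intro a m ha hm
    by_contra h
    rcases hAent a m h with rfl | hr
    · exact hm ha
    · exact hm (hanc m a hr ha)
  have hB0 : ∀ a m : Fin p, a ∈ Θ → m ∉ Θ → (1 - B) a m = 0 := by
    intro a m ha hm
    have hne : a ≠ m := by rintro rfl; exact hm ha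
    have hBz : B a m = 0 := by
      by_contra hB
      exact hm (hanc m a (Relation.TransGen.single hB) ha)
    rw [Matrix.sub_apply, Matrix.one_apply_ne hne, hBz, sub_zero]
  -- submatrices
  set AΘ : Matrix Θ Θ ℂ := Matrix.of (fun a b : Θ => A a b) with hAΘ
  set CΘ : Matrix Θ Θ ℂ := Matrix.of (fun a b : Θ => (1 - B) a b) with hCΘ
  have hsumA : ∀ (a : Θ) (f : Fin p → ℂ),
      (∑ m : Fin p, A a m * f m) = ∑ m : Θ, A a m * f m := by
    intro a f
    rw [Finset.sum_coe_sort Θ (fun m => A a m * f m)]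
    exact (Finset.sum_subset (Finset.subset_univ Θ)
      (fun m _ hm => by rw [hA0 a m a.2 hm, zero_mul])).symm
  have hsumC : ∀ (a : Θ) (f : Fin p → ℂ),
      (∑ m : Fin p, (1 - B) a m * f m) = ∑ m : Θ, (1 - B) a m * f m := by
    intro a f
    rw [Finset.sum_coe_sort Θ (fun m => (1 - B) a m * f m)]
    exact (Finset.sum_subset (Finset.subset_univ Θ)
      (fun m _ hm => by rw [hB0 a m a.2 hm, zero_mul])).symm
  have hCA : CΘ * AΘ = 1 := by
    ext a b
    have := congrFun (congrFun h1 a) b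
    rw [Matrix.mul_apply] at this
    rw [Matrix.mul_apply, hCΘ, hAΘ]
    simp only [Matrix.of_apply]
    rw [← hsumC a (fun m => A m b), this]
    by_cases hab : a = b
    · subst hab; rw [Matrix.one_apply_eq, Matrix.one_apply_eq]
    · rw [Matrix.one_apply_ne hab, Matrix.one_apply_ne (fun h => hab (Subtype.ext h))]
  have hAC : AΘ * CΘ = 1 := by
    ext a b
    have := congrFun (congrFun h2 a) b
    rw [Matrix.mul_apply] at this
    rw [Matrix.mul_apply, hCΘ, hAΘ]
    simp only [Matrix.of_apply]
    rw [← hsumA a (fun m => (1 - B) m b), this]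
    by_cases hab : a = b
    · subst hab; rw [Matrix.one_apply_eq, Matrix.one_apply_eq]
    · rw [Matrix.one_apply_ne hab, Matrix.one_apply_ne (fun h => hab (Subtype.ext h))]
  have hSgA : Sg = ((T : ℂ))⁻¹ • (A * Aᴴ) := by rw [hSg, hA]
  set M : Matrix Θ Θ ℂ := Matrix.of (fun a b : Θ => Sg a b) with hM
  have hMval : M = ((T : ℂ))⁻¹ • (AΘ * AΘᴴ) := by
    ext a b
    rw [hM, Matrix.of_apply, hSgA]
    simp only [Matrix.smul_apply, Matrix.mul_apply, Matrix.conjTranspose_apply,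
      Matrix.of_apply, hAΘ, smul_eq_mul]
    congr 1
    exact hsumA a (fun m => (starRingEnd ℂ) (A b m))
  have hMinv : M⁻¹ = (T : ℂ) • (CΘᴴ * CΘ) := by
    have key : M * ((T : ℂ) • (CΘᴴ * CΘ)) = 1 := by
      rw [hMval, smul_mul_assoc, mul_smul_comm, smul_smul, inv_mul_cancel₀ hTc, one_smul]
      calc AΘ * AΘᴴ * (CΘᴴ * CΘ) = AΘ * (AΘᴴ * CΘᴴ) * CΘ := by
            rw [Matrix.mul_assoc, Matrix.mul_assoc, Matrix.mul_assoc]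
        _ = AΘ * CΘ := by rw [← Matrix.conjTranspose_mul, hCA, Matrix.conjTranspose_one,
            Matrix.mul_one]
        _ = 1 := hAC
    exact Matrix.inv_eq_right_inv key
  -- Hermitian symmetry of Sg
  have hSgherm : ∀ a b : Fin p, Sg a b = (starRingEnd ℂ) (Sg b a) := by
    have hh : Sgᴴ = Sg := by
      rw [hSgA, Matrix.conjTranspose_smul, Matrix.conjTranspose_mul,
        Matrix.conjTranspose_conjTranspose]
      congr 1
      simp
    intro a b
    conv_lhs => rw [← hh]
    rw [Matrix.conjTranspose_apply]
    rfl
  -- the key vectors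
  set c : Θ → ℂ := fun m => (starRingEnd ℂ) (A j m) with hc
  have hu : (fun b : Θ => Sg b j) = ((T : ℂ))⁻¹ • (AΘ *ᵥ c) := by
    funext b
    rw [hSgA]
    simp only [Matrix.smul_apply, Matrix.mul_apply, Matrix.conjTranspose_apply,
      Pi.smul_apply, Matrix.mulVec, dotProduct, hAΘ, Matrix.of_apply, hc,
      smul_eq_mul]
    congr 1
    exact hsumA b (fun m => (starRingEnd ℂ) (A j m))
  have hcu : CΘ *ᵥ (fun b : Θ => Sg b j) = ((T : ℂ))⁻¹ • c := by
    rw [hu, Matrix.mulVec_smul, Matrix.mulVec_mulVec, hCA, Matrix.one_mulVec]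
  have hMu : M⁻¹ *ᵥ (fun b : Θ => Sg b j) = CΘᴴ *ᵥ c := by
    rw [hMinv, Matrix.smul_mulVec, ← Matrix.mulVec_mulVec, hcu,
      Matrix.mulVec_smul, smul_smul, mul_inv_cancel₀ hTc, one_smul]
  have hvm : (fun a : Θ => Sg j a) ᵥ* CΘᴴ = ((T : ℂ))⁻¹ • fun m : Θ => A j m := by
    funext m
    have hcm : ((CΘ *ᵥ fun b : Θ => Sg b j) m) = ((T : ℂ))⁻¹ * c m := by
      rw [hcu]; simp
    simp only [Matrix.vecMul, dotProduct, Matrix.conjTranspose_apply,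
      Pi.smul_apply, smul_eq_mul]
    calc ∑ a : Θ, Sg j a * (starRingEnd ℂ) (CΘ m a)
        = (starRingEnd ℂ) (∑ a : Θ, CΘ m a * Sg a j) := by
          rw [map_sum]
          refine Finset.sum_congr rfl fun a _ => ?_
          rw [_root_.map_mul, ← hSgherm j a]
          ring
      _ = (starRingEnd ℂ) (((T : ℂ))⁻¹ * c m) := by
          rw [← hcm]
          simp [Matrix.mulVec, dotProduct]
      _ = ((T : ℂ))⁻¹ * A j m := by
          rw [_root_.map_mul]
          simp [hc]
  have hE : (fun a : Θ => Sg j a) ⬝ᵥ (M⁻¹ *ᵥ (fun b : Θ => Sg b j)) =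
      ((T : ℂ))⁻¹ * ∑ m : Θ, A j m * (starRingEnd ℂ) (A j m) := by
    rw [hMu, Matrix.dotProduct_mulVec, hvm, smul_dotProduct, smul_eq_mul]
    congr 1
  have hSjj : Sg j j = ((T : ℂ))⁻¹ * ∑ m : Fin p, A j m * (starRingEnd ℂ) (A j m) := by
    rw [hSgA]
    simp [Matrix.smul_apply, Matrix.mul_apply, Matrix.conjTranspose_apply, smul_eq_mul]
  have hcv : condVar j = ((T : ℂ))⁻¹ * ∑ m ∈ Θᶜ, A j m * (starRingEnd ℂ) (A j m) := by
    have hMeq : (fun a b : Θ => Sg a b : Matrix Θ Θ ℂ) = M := rfl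
    rw [hcond j, hMeq, hE, hSjj, ← mul_sub]
    congr 1
    rw [Finset.sum_coe_sort Θ (fun m => A j m * (starRingEnd ℂ) (A j m)),
      ← Finset.sum_add_sum_compl Θ (fun m => A j m * (starRingEnd ℂ) (A j m))]
    ring
  constructor
  · -- all parents in Θ
    intro hpar
    have hzero : ∀ m : Fin p, m ∉ Θ → m ≠ j → A j m = 0 := by
      intro m hm hne
      by_contra h
      rcases hAent j m h with heq | hr
      · exact hne heq.symm
      · cases hr with
        | single h' => exact hm (hpar m h')
        | tail hmk hkj => exact hm (hanc m _ hmk (hpar _ hkj))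
    have hsum1 : ∑ m ∈ Θᶜ, A j m * (starRingEnd ℂ) (A j m) = 1 := by
      rw [Finset.sum_eq_single j]
      · rw [hAdiag j]; simp
      · intro m hmem hne
        rw [hzero m (by simpa using hmem) hne]
        simp
      · intro h
        exact absurd (Finset.mem_compl.mpr hjΘ) h
    rw [hcv, hsum1, mul_one]
  · -- some parent outside Θ
    rintro ⟨k0, hk0, hk0Θ⟩
    set S : Finset (Fin p) := Finset.univ.filter (fun k => B j k ≠ 0 ∧ k ∉ Θ) with hSdef
    have hSne : S.Nonempty := ⟨k0, by simp [hSdef, hk0, hk0Θ]⟩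
    obtain ⟨k', hk'S, hmax⟩ := Finset.exists_max_image S (Stmt10Aux.ht B) hSne
    have hk'mem := Finset.mem_filter.mp hk'S
    have hBjk' : B j k' ≠ 0 := hk'mem.2.1
    have hk'Θ : k' ∉ Θ := hk'mem.2.2
    have hjk' : j ≠ k' := by
      rintro rfl
      exact hacyc j (Relation.TransGen.single hBjk')
    have hAe : A = 1 + B * A := by
      have h1' : A - B * A = 1 := by
        calc A - B * A = (1 - B) * A := by rw [Matrix.sub_mul, Matrix.one_mul]
          _ = 1 := h1
      rw [← h1']; abel
    have hAjk' : A j k' = B j k' := by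
      calc A j k' = (1 + B * A) j k' := by rw [← hAe]
        _ = (1 : Matrix (Fin p) (Fin p) ℂ) j k' + ∑ l, B j l * A l k' := by
            rw [Matrix.add_apply, Matrix.mul_apply]
        _ = B j k' := by
            rw [Matrix.one_apply_ne hjk', zero_add, Finset.sum_eq_single k']
            · rw [hAdiag, mul_one]
            · intro l _ hlne
              by_cases hBl : B j l = 0
              · rw [hBl, zero_mul]
              have hAl : A l k' = 0 := by
                by_contra h
                rcases hAent l k' h with heq | hr
                · exact hlne heq
                · by_cases hlΘ : l ∈ Θ
                  · exact hk'Θ (hanc k' l hr hlΘ)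
                  · have hlS : l ∈ S := by simp [hSdef, hBl, hlΘ]
                    have hle := hmax l hlS
                    have hlt := Stmt10Aux.reach_ht B hacyc hr
                    omega
              rw [hAl, mul_zero]
            · intro h; exact absurd (Finset.mem_univ k') h
    have hsub : ({j, k'} : Finset (Fin p)) ⊆ Θᶜ := by
      intro x hx
      rcases Finset.mem_insert.mp hx with rfl | hx
      · exact Finset.mem_compl.mpr hjΘ
      · rw [Finset.mem_singleton.mp hx]
        exact Finset.mem_compl.mpr hk'Θ
    have hsum_ge : (1 : ℝ) + η ≤ ∑ m ∈ Θᶜ, Complex.normSq (A j m) := by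
      have hle1 : ∑ m ∈ ({j, k'} : Finset (Fin p)), Complex.normSq (A j m) ≤
          ∑ m ∈ Θᶜ, Complex.normSq (A j m) :=
        Finset.sum_le_sum_of_subset_of_nonneg hsub
          (fun i _ _ => Complex.normSq_nonneg _)
      have heq1 : ∑ m ∈ ({j, k'} : Finset (Fin p)), Complex.normSq (A j m) =
          1 + Complex.normSq (B j k') := by
        rw [Finset.sum_pair hjk', hAdiag, hAjk']
        simp
      have hηle : η ≤ Complex.normSq (B j k') := by
        rw [hη]
        refine csInf_le ⟨0, ?_⟩ ⟨k', j, hBjk', rfl⟩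
        rintro x ⟨k'', j'', _, rfl⟩
        exact Complex.normSq_nonneg _
      linarith
    have hre : (condVar j).re = (T : ℝ)⁻¹ * ∑ m ∈ Θᶜ, Complex.normSq (A j m) := by
      rw [hcv]
      have hcast : ∑ m ∈ Θᶜ, A j m * (starRingEnd ℂ) (A j m) =
          (((∑ m ∈ Θᶜ, Complex.normSq (A j m) : ℝ)) : ℂ) := by
        push_cast
        exact Finset.sum_congr rfl fun m _ => (Complex.mul_conj _)
      have hTcast : ((T : ℂ))⁻¹ = (((T : ℝ)⁻¹ : ℝ) : ℂ) := by push_cast; ring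
      rw [hcast, hTcast, ← Complex.ofReal_mul, Complex.ofReal_re]
    rw [hre, one_div]
    have hTnn : (0 : ℝ) ≤ (T : ℝ)⁻¹ := by positivity
    exact mul_le_mul_of_nonneg_left hsum_ge hTnn
end

section
/- The problem min over lower-triangular complex matrices L(1),…,L(M) with positive diagonals and Z of Σ_{k=1}^M N[−log det(L(k)^H L(k)) + tr(S̃(k) L(k)^H L(k))] + λΣ_{ij}|Z_{ij}| subject to L(k) = Z for all k is a convex optimization problem: the objective F(L) = −log det(L^H L) + tr(S̃ L^H L) is convex in L over lower-triangular matrices with positive diagonal when S̃ is Hermitian positive semidefinite. -/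
/-!
On the feasible set `det L = ∏ Lᵢᵢ` is real and positive, so
`-log det (Lᴴ L) = -2 ∑ log (Re Lᵢᵢ)` is a sum of convex functions of single coordinates.
Writing `S = Bᴴ B`, the trace term is `tr (S Lᴴ L) = ‖L Bᴴ‖²` (Frobenius norm), the square of
a norm of a linear function of `L`.
-/

open Matrix ComplexOrder Set

theorem convexOn_finset_sum {𝕜 E β ι : Type*} [Semiring 𝕜] [PartialOrder 𝕜]
    [AddCommMonoid E] [AddCommMonoid β] [PartialOrder β] [IsOrderedAddMonoid β] [SMul 𝕜 E]
    [Module 𝕜 β]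
    {s : Set E} (hs : Convex 𝕜 s) (t : Finset ι) {f : ι → E → β}
    (hf : ∀ i ∈ t, ConvexOn 𝕜 s (f i)) : ConvexOn 𝕜 s fun x => ∑ i ∈ t, f i x := by
  refine ⟨hs, fun x hx y hy a b ha hb hab => ?_⟩
  simp only [Finset.smul_sum, ← Finset.sum_add_distrib]
  exact Finset.sum_le_sum fun i hi => (hf i hi).2 hx hy ha hb hab

namespace Matrix

section
variable {𝕜 m n : Type*} [RCLike 𝕜] [Fintype m] [Fintype n]

theorem re_trace_conjTranspose_mul_self (A : Matrix m n 𝕜) :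
    RCLike.re (Aᴴ * A).trace = ∑ j, ∑ i, ‖A i j‖ ^ 2 := by
  simp only [trace, Matrix.diag, mul_apply, conjTranspose_apply, RCLike.star_def,
    RCLike.conj_mul, map_sum, ← RCLike.ofReal_pow, RCLike.ofReal_re]

theorem convexOn_re_trace_conjTranspose_mul_self :
    ConvexOn ℝ univ fun A : Matrix m n 𝕜 => RCLike.re (Aᴴ * A).trace := by
  simp_rw [re_trace_conjTranspose_mul_self]
  have hsq : ConvexOn ℝ univ fun z : 𝕜 => ‖z‖ ^ 2 :=
    convexOn_univ_norm.pow (fun _ _ => norm_nonneg _) 2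
  exact convexOn_finset_sum convex_univ _ fun j _ => convexOn_finset_sum convex_univ _ fun i _ =>
    hsq.comp_linearMap (entryLinearMap ℝ 𝕜 i j)

open scoped MatrixOrder in
theorem PosSemidef.convexOn_re_trace_mul_conjTranspose_mul_self {S : Matrix n n 𝕜}
    (hS : S.PosSemidef) :
    ConvexOn ℝ univ fun L : Matrix m n 𝕜 => RCLike.re (S * (Lᴴ * L)).trace := by
  classical
  obtain ⟨B, rfl⟩ := CStarAlgebra.nonneg_iff_eq_star_mul_self.mp hS.nonneg
  have hfrob : ∀ L : Matrix m n 𝕜,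
      (star B * B * (Lᴴ * L)).trace = ((L * Bᴴ)ᴴ * (L * Bᴴ)).trace := by
    intro L
    rw [star_eq_conjTranspose, conjTranspose_mul, conjTranspose_conjTranspose, Matrix.mul_assoc,
      trace_mul_comm]
    simp only [Matrix.mul_assoc]
  simp_rw [hfrob]
  exact convexOn_re_trace_conjTranspose_mul_self.comp_linearMap (mulRightLinearMap m ℝ Bᴴ)

theorem IsLowerTriangular.det_conjTranspose_mul_self [LinearOrder n] {L : Matrix n n 𝕜}
    (hL : L.IsLowerTriangular) :
    (Lᴴ * L).det = ((∏ i, ‖L i i‖ ^ 2 : ℝ) : 𝕜) := by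
  rw [det_mul, det_conjTranspose, RCLike.star_def, RCLike.conj_mul,
    det_of_isLowerTriangular L hL, norm_prod, Finset.prod_pow, RCLike.ofReal_pow]

end

theorem IsLowerTriangular.log_re_det_conjTranspose_mul_self {n : Type*} [Fintype n]
    [LinearOrder n] {L : Matrix n n ℂ} (hL : L.IsLowerTriangular)
    (hdiag : ∀ i, (L i i).im = 0 ∧ 0 < (L i i).re) :
    Real.log (Lᴴ * L).det.re = 2 * ∑ i, Real.log (L i i).re := by
  have hnorm : ∀ i, ‖L i i‖ = (L i i).re := fun i => by
    rw [← Complex.abs_re_eq_norm.2 (hdiag i).1, abs_of_pos (hdiag i).2]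
  have hdet := congrArg Complex.re hL.det_conjTranspose_mul_self
  simp only [Complex.coe_algebraMap, Complex.ofReal_re] at hdet
  rw [hdet, Real.log_prod fun i _ => by simp [hnorm, (hdiag i).2.ne'], Finset.mul_sum]
  simp [hnorm, Real.log_pow]

theorem convexOn_neg_log_re_apply {m n : Type*} (i : m) (j : n) :
    ConvexOn ℝ {L : Matrix m n ℂ | 0 < (L i j).re} fun L => -Real.log (L i j).re :=
  strictConcaveOn_log_Ioi.concaveOn.neg.comp_linearMap
    (Complex.reLm.comp (entryLinearMap ℝ ℂ i j))

end Matrix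

theorem convex_setOf_lowerTriangular_and_diag_pos {n : Type*} [LT n] :
    Convex ℝ {L : Matrix n n ℂ | (∀ i j : n, i < j → L i j = 0) ∧
      ∀ i, (L i i).im = 0 ∧ 0 < (L i i).re} := by
  rintro x ⟨hx0, hx⟩ y ⟨hy0, hy⟩ a b ha hb hab
  refine ⟨fun i j hij => by simp [hx0 i j hij, hy0 i j hij],
    fun i => ⟨by simp [(hx i).1, (hy i).1], ?_⟩⟩
  simpa [(hx i).1, (hy i).1] using convex_Ioi (0 : ℝ) (hx i).2 (hy i).2 ha hb hab

/-- The objective `F(L) = −log det(Lᴴ L) + tr(S̃ Lᴴ L)` of the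
penalized-likelihood problem is convex over the set of lower-triangular complex matrices
with positive (real) diagonal, when `S̃` is Hermitian positive semidefinite.  (Hence the
constrained ADMM problem, which sums such terms over frequencies and adds the convex
penalty `λ∑|Z_{ij}|` with affine constraints `L(k) = Z`, is a convex problem.) -/
theorem stmt18 (p : ℕ) (S : Matrix (Fin p) (Fin p) ℂ) (hS : S.PosSemidef)
    (D : Set (Matrix (Fin p) (Fin p) ℂ))
    (hD : D = {L | (∀ i j : Fin p, i < j → L i j = 0) ∧
      ∀ i, (L i i).im = 0 ∧ 0 < (L i i).re})
    (F : Matrix (Fin p) (Fin p) ℂ → ℝ)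
    (hF : ∀ L, F L = -Real.log ((Lᴴ * L).det.re) + ((S * (Lᴴ * L)).trace).re) :
    ConvexOn ℝ D F := by
  subst hD
  have hD := convex_setOf_lowerTriangular_and_diag_pos (n := Fin p)
  have hlog : ConvexOn ℝ _ fun L : Matrix (Fin p) (Fin p) ℂ =>
      (2 : ℝ) • ∑ i, -Real.log (L i i).re :=
    (convexOn_finset_sum hD _ fun i _ =>
      (convexOn_neg_log_re_apply i i).subset (fun L hL => (hL.2 i).2) hD).smul zero_le_two
  have htrace := hS.convexOn_re_trace_mul_conjTranspose_mul_self.subset (subset_univ _) hD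
  refine (hlog.add htrace).congr fun L hL => ?_
  have hL_tri : L.IsLowerTriangular := fun i j hij => hL.1 i j hij
  rw [hF, hL_tri.log_re_det_conjTranspose_mul_self hL.2]
  simp [Finset.mul_sum]
end
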